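/- Define the sequence x₀ = 1/2 + ra, x₁ = (s₂ + 2rs₂a)(1/2 + 1/(2s₂) − x₀), and x_{i+1} = (s₁ + 2rs₁a)(x_i − 1/2 + 1/(2s₁)) for i ≥ 1. Then for every integer m ≥ 1, x_m = 1/2 − 1/(2s₁) if and only if (s₁ + 2rs₁a)^m = 1/(4r²s₂²a²). -/

import Mathlib

/-!
Put `L = s₁ + 2 r s₁ a` and `c = 1/2 - 1/(2 s₁)`. From `x₁` on, the orbit follows the affine map
`x ↦ L (x - c)`, so `(L - 1) x_{n+1} - L c = L ^ n ((L - 1) x₁ - L c)`, and `x_{n+1} = c` becomes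
`L ^ n (L c - (L - 1) x₁) = c`. Since `1/s₁ + 1/s₂ = 1`, we have `c = 1/(2 s₂)`,
`x₁ = (1 + 2ra)(1 - 2ras₂)/2` and `L - 1 = s₁ (1 + 2ras₂)/s₂`, so the difference of squares gives
`L c - (L - 1) x₁ = 4 r² s₂² a² · L c`, and the criterion reads `L ^ (n + 1) · 4 r² s₂² a² = 1`.
-/

/-- The orbit of the point 1/2 + ra under the perturbed W-shaped map W_a:
`x₀ = 1/2 + ra`, `x₁ = (s₂+2rs₂a)(1/2 + 1/(2s₂) − x₀)`, and
`x_{i+1} = (s₁+2rs₁a)(x_i − 1/2 + 1/(2s₁))` for `i ≥ 1`. -/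
noncomputable def orbitW (s₁ s₂ r a : ℝ) : ℕ → ℝ
  | 0 => 1 / 2 + r * a
  | 1 => (s₂ + 2 * r * s₂ * a) * (1 / 2 + 1 / (2 * s₂) - (1 / 2 + r * a))
  | (n + 2) => (s₁ + 2 * r * s₁ * a) * (orbitW s₁ s₂ r a (n + 1) - 1 / 2 + 1 / (2 * s₁))

theorem affine_orbit_closed_form {R : Type*} [CommRing R] {u : ℕ → R} {L c : R}
    (hu : ∀ n, u (n + 1) = L * (u n - c)) (n : ℕ) :
    (L - 1) * u n - L * c = L ^ n * ((L - 1) * u 0 - L * c) := by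
  induction n with
  | zero => ring
  | succ n ih => rw [hu, pow_succ', mul_assoc, ← ih]; ring

theorem affine_orbit_eq_iff {K : Type*} [Field K] {u : ℕ → K} {L c : K}
    (hu : ∀ n, u (n + 1) = L * (u n - c)) (hL : L ≠ 1) (n : ℕ) :
    u n = c ↔ L ^ n * (L * c - (L - 1) * u 0) = c := by
  have hL' : L - 1 ≠ 0 := sub_ne_zero.mpr hL
  have h := affine_orbit_closed_form hu n
  constructor
  · intro hn
    rw [hn] at h
    linear_combination h
  · intro hn
    apply mul_left_cancel₀ hL'
    linear_combination h - hn

section orbitW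

variable {s₁ s₂ r a : ℝ}

theorem orbitW_add_two (n : ℕ) :
    orbitW s₁ s₂ r a (n + 2) =
      (s₁ + 2 * r * s₁ * a) * (orbitW s₁ s₂ r a (n + 1) - (1 / 2 - 1 / (2 * s₁))) := by
  rw [orbitW]; ring

theorem orbitW_one_defect (hs₁ : s₁ ≠ 0) (hs₂ : s₂ ≠ 0) (hsum : 1 / s₁ + 1 / s₂ = 1) :
    (s₁ + 2 * r * s₁ * a) * (1 / 2 - 1 / (2 * s₁))
        - (s₁ + 2 * r * s₁ * a - 1) * orbitW s₁ s₂ r a 1 =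
      4 * r ^ 2 * s₂ ^ 2 * a ^ 2 * ((s₁ + 2 * r * s₁ * a) * (1 / 2 - 1 / (2 * s₁))) := by
  have hprod : s₁ * s₂ = s₁ + s₂ := by
    field_simp at hsum
    linarith
  rw [orbitW]
  field_simp
  linear_combination (2 * r * a * (1 + 2 * r * a) * (1 - 2 * r * a * s₂)) * hprod

end orbitW

theorem stmt_2 (s₁ s₂ r a : ℝ) (hs₁ : 1 < s₁) (hs₂ : 1 < s₂)
    (hsum : 1 / s₁ + 1 / s₂ = 1) (hr : 0 < r) (ha : 0 < a) :
    ∀ m : ℕ, 1 ≤ m →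
      (orbitW s₁ s₂ r a m = 1 / 2 - 1 / (2 * s₁) ↔
        (s₁ + 2 * r * s₁ * a) ^ m = 1 / (4 * r ^ 2 * s₂ ^ 2 * a ^ 2)) := by
  intro m hm
  obtain ⟨n, rfl⟩ := Nat.exists_eq_add_of_le' hm
  have hL : s₁ + 2 * r * s₁ * a ≠ 1 := by
    have : 0 < r * s₁ * a := by positivity
    linarith
  have hc : 1 / 2 - 1 / (2 * s₁) ≠ 0 := by
    have : 1 / 2 - 1 / (2 * s₁) = 1 / (2 * s₂) := by linear_combination (-1 / 2) * hsum
    rw [this]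
    positivity
  have hk : 4 * r ^ 2 * s₂ ^ 2 * a ^ 2 ≠ 0 := by positivity
  rw [affine_orbit_eq_iff (u := fun n ↦ orbitW s₁ s₂ r a (n + 1)) orbitW_add_two hL,
    orbitW_one_defect (one_pos.trans hs₁).ne' (one_pos.trans hs₂).ne' hsum, eq_div_iff hk,
    ← mul_eq_right₀ hc]
  ring_nf
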